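/- arXiv:1806.02102 — 6 statements merged into one kernel-verified Lean document; each statement's English description precedes it below -/
import Mathlib

section
/- Let G be a finite group and H a proper subgroup of G. Then κ_P(G) = κ_P(H) if and only if every element x of G \ H satisfies x^2 = 1 and x h x^{-1} = h^{-1} for all h ∈ H (so that H is a normal subgroup inverted by every element outside H, and every element of G \ H is an involution). -/
/-- The number of spanning trees (tree-number / complexity) of a simple graph. -/
noncomputable def treeNumber {V : Type*} (G : SimpleGraph V) : ℕ :=
  Nat.card {T : SimpleGraph V // T ≤ G ∧ T.IsTree}

/-- The power graph of a group: distinct `x, y` are adjacent iff one is a power of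
the other, i.e. one lies in the cyclic subgroup generated by the other. -/
def powerGraph (G : Type*) [Group G] : SimpleGraph G where
  Adj x y := x ≠ y ∧ (x ∈ Subgroup.zpowers y ∨ y ∈ Subgroup.zpowers x)
  symm := ⟨fun _ _ h => ⟨h.1.symm, h.2.symm⟩⟩
  loopless := ⟨fun _ h => h.1 rfl⟩

/-!
The identity is adjacent to every vertex of the power graph. If every `x ∉ H` has `1` as its only
neighbour, the elements outside `H` are leaves hanging on `1`, and restriction to `H` is a
bijection between the spanning trees of `P(G)` and those of `P(H)`. Otherwise some `x ∉ H` has a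
neighbour `y ≠ 1`, and a spanning tree through the edge `xy` does not arise from a spanning tree
of `P(H)` by hanging the outside vertices on `1`, so `κ_P(H) < κ_P(G)`.

On the group side, `x ∉ H` has no neighbour but `1` iff every element outside `H` is an
involution (`x⁻¹` is a neighbour of `x` unless `x = x⁻¹`); since `xh ∉ H` for `h ∈ H`, this
says exactly that `x² = 1` and `(xh)² = 1`, i.e. `x h x⁻¹ = h⁻¹`.
-/

namespace SimpleGraph

variable {V : Type*} {G : SimpleGraph V} {s : Set V} {c u v : V}

lemma Walk.IsCycle.notMem_support_of_subsingleton_neighborSet {p : G.Walk u u}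
    (hp : p.IsCycle) (hv : (G.neighborSet v).Subsingleton) : v ∉ p.support := by
  intro hvp
  obtain rfl | hvu := eq_or_ne v u
  · exact hp.snd_ne_penultimate (hv (p.adj_snd hp.not_nil) (p.adj_penultimate hp.not_nil).symm)
  · exact hp.isCircuit.isTrail.not_mem_support_of_subsingleton_neighborSet hvu hvu hv hvp

lemma IsAcyclic.of_induce (hs : (G.induce s).IsAcyclic)
    (hleaf : ∀ v ∉ s, (G.neighborSet v).Subsingleton) : G.IsAcyclic := by
  intro u p hp
  have hsupp : ∀ v ∈ p.support, v ∈ s := fun v hv =>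
    by_contra fun hvs => hp.notMem_support_of_subsingleton_neighborSet (hleaf v hvs) hv
  refine hs (p.induce s hsupp) (Walk.IsCycle.of_map (f := (Embedding.induce s).toHom) ?_)
  rwa [Walk.map_induce]

theorem isTree_iff_isTree_induce (hleaf : ∀ v ∉ s, ∃ u ∈ s, G.neighborSet v = {u}) :
    G.IsTree ↔ (G.induce s).IsTree := by
  have hsub : ∀ v ∉ s, (G.neighborSet v).Subsingleton := fun v hv => by
    obtain ⟨u, -, hu⟩ := hleaf v hv
    exact hu ▸ Set.subsingleton_singleton
  have hreach : ∀ v, ∃ u ∈ s, G.Reachable v u := fun v => by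
    by_cases hv : v ∈ s
    · exact ⟨v, hv, .rfl⟩
    · obtain ⟨u, hu, hvu⟩ := hleaf v hv
      exact ⟨u, hu, Adj.reachable (show u ∈ G.neighborSet v from hvu ▸ rfl)⟩
  constructor
  · rintro ⟨hconn, hacyc⟩
    obtain ⟨u, hu, -⟩ := hreach hconn.nonempty.some
    have : Nonempty s := ⟨⟨u, hu⟩⟩
    exact ⟨.mk (hconn.preconnected.induce_of_degree_eq_one hsub), hacyc.induce s⟩
  · rintro ⟨hconn, hacyc⟩
    refine ⟨?_, hacyc.of_induce hsub⟩
    have : Nonempty V := ⟨hconn.nonempty.some⟩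
    refine Connected.mk fun v w => ?_
    obtain ⟨a, ha, hva⟩ := hreach v
    obtain ⟨b, hb, hwb⟩ := hreach w
    exact hva.trans (((hconn.preconnected ⟨a, ha⟩ ⟨b, hb⟩).map (Embedding.induce s).toHom).trans
      hwb.symm)

lemma Connected.neighborSet_eq_singleton (hG : G.Connected) (hvc : v ≠ c)
    (hv : ∀ w, G.Adj v w → w = c) : G.neighborSet v = {c} := by
  obtain ⟨p⟩ := hG.preconnected v c
  have hadj := p.adj_snd (Walk.not_nil_of_ne hvc)
  rw [hv _ hadj] at hadj
  exact Set.ext fun w => ⟨hv w, fun hw => hw ▸ hadj⟩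

def extendByLeaves (T : SimpleGraph s) (c : V) : SimpleGraph V :=
  T.map (Function.Embedding.subtype (· ∈ s)) ⊔ fromRel fun v w => v ∉ s ∧ w = c

variable {T : SimpleGraph s}

lemma extendByLeaves_adj_of_notMem (hc : c ∈ s) (hv : v ∉ s) {w : V} :
    (T.extendByLeaves c).Adj v w ↔ w = c := by
  simp only [extendByLeaves, sup_adj, map_adj', fromRel_adj, Function.Embedding.coe_subtype]
  constructor
  · rintro (⟨-, a, b, -, rfl, rfl⟩ | ⟨-, ⟨-, rfl⟩ | ⟨-, rfl⟩⟩)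
    · exact absurd a.2 hv
    · rfl
    · exact absurd hc hv
  · rintro rfl
    exact Or.inr ⟨fun h => hv (h ▸ hc), Or.inl ⟨hv, rfl⟩⟩

lemma neighborSet_extendByLeaves (hc : c ∈ s) (hv : v ∉ s) :
    (T.extendByLeaves c).neighborSet v = {c} :=
  Set.ext fun _ => extendByLeaves_adj_of_notMem hc hv

lemma induce_extendByLeaves (c : V) : (T.extendByLeaves c).induce s = T := by
  ext a b
  simp only [induce_adj, extendByLeaves, sup_adj, map_adj', fromRel_adj,
    Function.Embedding.coe_subtype, a.2, b.2, not_true_eq_false, false_and, or_self, and_false,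
    or_false]
  refine ⟨fun ⟨_, _, _, h, ha, hb⟩ => ?_, fun h => ⟨(h.ne <| Subtype.ext ·), a, b, h, rfl, rfl⟩⟩
  rwa [← Subtype.ext ha, ← Subtype.ext hb]

lemma isTree_extendByLeaves_iff (hc : c ∈ s) : (T.extendByLeaves c).IsTree ↔ T.IsTree := by
  rw [isTree_iff_isTree_induce fun v hv => ⟨c, hc, neighborSet_extendByLeaves hc hv⟩,
    induce_extendByLeaves]

lemma extendByLeaves_le {K : SimpleGraph V} (hT : T ≤ K.induce s) (hK : ∀ v ∉ s, K.Adj v c) :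
    T.extendByLeaves c ≤ K := by
  rintro v w (⟨-, a, b, hab, rfl, rfl⟩ | ⟨-, ⟨hv, rfl⟩ | ⟨hw, rfl⟩⟩)
  · exact hT hab
  · exact hK v hv
  · exact (hK w hw).symm

lemma extendByLeaves_induce {T : SimpleGraph V} (hT : T.Connected) (hc : c ∈ s)
    (hleaf : ∀ v ∉ s, ∀ w, T.Adj v w → w = c) : (T.induce s).extendByLeaves c = T := by
  have hadj : ∀ v ∉ s, ∀ w, T.Adj v w ↔ w = c := fun v hv w => by
    rw [← mem_neighborSet, hT.neighborSet_eq_singleton (ne_of_mem_of_not_mem hc hv).symm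
      (hleaf v hv), Set.mem_singleton_iff]
  ext v w
  by_cases hv : v ∈ s
  · by_cases hw : w ∈ s
    · simpa only [induce_adj, eq_iff_iff] using
        congrArg (fun X => X.Adj ⟨v, hv⟩ ⟨w, hw⟩) (induce_extendByLeaves (T := T.induce s) c)
    · rw [adj_comm, extendByLeaves_adj_of_notMem hc hw, adj_comm, hadj w hw]
  · rw [extendByLeaves_adj_of_notMem hc hv, hadj v hv]

theorem treeNumber_eq_treeNumber_induce_iff [Finite V] {K : SimpleGraph V} (hc : c ∈ s)
    (hK : K.IsUniversal c) :
    treeNumber K = treeNumber (K.induce s) ↔ ∀ v ∉ s, ∀ w, K.Adj v w → w = c := by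
  have hKs : ∀ v ∉ s, K.Adj v c := fun v hv => (hK (ne_of_mem_of_not_mem hc hv)).symm
  let extend (T : {T : SimpleGraph s // T ≤ K.induce s ∧ T.IsTree}) :
      {T : SimpleGraph V // T ≤ K ∧ T.IsTree} :=
    ⟨T.1.extendByLeaves c, extendByLeaves_le T.2.1 hKs, (isTree_extendByLeaves_iff hc).2 T.2.2⟩
  have hinj : Function.Injective extend := fun T T' h => Subtype.ext <| by
    simpa only [extend, induce_extendByLeaves] using congrArg (fun T => T.1.induce s) h
  have hcard : Nat.card _ = Nat.card _ ↔ Function.Surjective extend :=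
    ((Nat.bijective_iff_injective_and_card extend).trans (and_iff_right hinj)).symm.trans
      (and_iff_right hinj)
  rw [treeNumber, treeNumber, eq_comm, hcard]
  constructor
  · intro hsurj v hv w hvw
    by_contra hwc
    obtain ⟨T, hvwT, hTK, hT⟩ := (Connected.of_isUniversal hK).exists_isTree_le_of_le_of_isAcyclic
      ((edge_le_iff K).2 (Or.inr hvw))
      (by simpa using isAcyclic_bot.sup_edge_of_not_reachable (reachable_bot.not.2 hvw.ne))
    obtain ⟨T', hT'⟩ := hsurj ⟨T, hTK, hT⟩
    have hvwT' : (extend T').1.Adj v w := by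
      rw [hT']
      exact hvwT ((edge_adj v w v w).2 ⟨Or.inl ⟨rfl, rfl⟩, hvw.ne⟩)
    exact hwc ((extendByLeaves_adj_of_notMem hc hv).1 hvwT')
  · intro hleaf ⟨T, hTK, hT⟩
    have hTleaf : ∀ v ∉ s, ∀ w, T.Adj v w → w = c := fun v hv w h => hleaf v hv w (hTK h)
    refine ⟨⟨T.induce s, fun a b h => hTK h, (isTree_iff_isTree_induce fun v hv =>
      ⟨c, hc, hT.connected.neighborSet_eq_singleton (ne_of_mem_of_not_mem hc hv).symm
        (hTleaf v hv)⟩).1 hT⟩, Subtype.ext ?_⟩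
    exact extendByLeaves_induce hT.connected hc hTleaf

end SimpleGraph

section PowerGraph

variable {G : Type*} [Group G] {g x y : G}

lemma eq_one_or_eq_of_mem_zpowers_of_sq_eq_one (hg : g ^ 2 = 1) (hx : x ∈ Subgroup.zpowers g) :
    x = 1 ∨ x = g := by
  obtain ⟨k, rfl⟩ := Subgroup.mem_zpowers_iff.mp hx
  obtain ⟨m, rfl | rfl⟩ := Int.even_or_odd' k
  · left
    rw [zpow_mul, zpow_two, ← sq, hg, one_zpow]
  · right
    rw [zpow_add_one, zpow_mul, zpow_two, ← sq, hg, one_zpow, one_mul]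

lemma mul_mul_inv_eq_inv_of_sq_eq_one (hx : x ^ 2 = 1) (hxy : (x * y) ^ 2 = 1) :
    x * y * x⁻¹ = y⁻¹ := by
  rw [sq] at hx hxy
  rw [inv_eq_of_mul_eq_one_right hx]
  exact eq_inv_of_mul_eq_one_left (by rw [← hxy]; group)

lemma powerGraph_isUniversal_one : (powerGraph G).IsUniversal 1 :=
  fun _ hx => ⟨hx, Or.inl (Subgroup.one_mem _)⟩

lemma sq_eq_one_of_forall_powerGraph_adj_eq_one (hx : x ≠ 1)
    (h : ∀ y, (powerGraph G).Adj x y → y = 1) : x ^ 2 = 1 := by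
  by_contra hsq
  have hne : x ≠ x⁻¹ := fun he => hsq (by rw [sq]; nth_rewrite 2 [he]; exact mul_inv_cancel x)
  exact hx (inv_eq_one.mp (h _ ⟨hne, Or.inr (Subgroup.inv_mem _ (Subgroup.mem_zpowers x))⟩))

lemma eq_one_of_powerGraph_adj {H : Subgroup G} (hH : ∀ z ∉ H, z ^ 2 = 1) (hx : x ∉ H)
    (hxy : (powerGraph G).Adj x y) : y = 1 := by
  obtain ⟨hne, hmem | hmem⟩ := hxy
  · have hy : y ∉ H := fun hy => hx (Subgroup.zpowers_le.2 hy hmem)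
    obtain rfl | rfl := eq_one_or_eq_of_mem_zpowers_of_sq_eq_one (hH y hy) hmem
    · exact absurd H.one_mem hx
    · exact absurd rfl hne
  · exact (eq_one_or_eq_of_mem_zpowers_of_sq_eq_one (hH x hx) hmem).resolve_right hne.symm

end PowerGraph

theorem treeNumber_powerGraph_eq_iff_general {G : Type*} [Group G] [Finite G]
    (H : Subgroup G) :
    treeNumber (powerGraph G) = treeNumber ((powerGraph G).induce (H : Set G)) ↔
      ∀ x : G, x ∉ H → x ^ 2 = 1 ∧ ∀ h ∈ H, x * h * x⁻¹ = h⁻¹ := by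
  rw [SimpleGraph.treeNumber_eq_treeNumber_induce_iff H.one_mem powerGraph_isUniversal_one]
  constructor
  · intro hleaf
    have hsq : ∀ x ∉ H, x ^ 2 = 1 := fun x hx =>
      sq_eq_one_of_forall_powerGraph_adj_eq_one (ne_of_mem_of_not_mem H.one_mem hx).symm
        (hleaf x hx)
    refine fun x hx => ⟨hsq x hx, fun h hh => mul_mul_inv_eq_inv_of_sq_eq_one (hsq x hx) (hsq _ ?_)⟩
    exact fun hxh => hx (by simpa using H.mul_mem hxh (H.inv_mem hh))
  · exact fun h x hx y hxy => eq_one_of_powerGraph_adj (fun z hz => (h z hz).1) hx hxy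

/-- For a proper subgroup `H` of a finite group `G`, `κ_P(G) = κ_P(H)` iff every
element `x` outside `H` is an involution inverting `H` by conjugation:
`x² = 1` and `x h x⁻¹ = h⁻¹` for all `h ∈ H`. -/
theorem treeNumber_powerGraph_eq_iff {G : Type*} [Group G] [Finite G]
    (H : Subgroup G) (hH : H ≠ ⊤) :
    treeNumber (powerGraph G) = treeNumber ((powerGraph G).induce (H : Set G)) ↔
      ∀ x : G, x ∉ H → x ^ 2 = 1 ∧ ∀ h ∈ H, x * h * x⁻¹ = h⁻¹ :=
  treeNumber_powerGraph_eq_iff_general H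
end

section
/- Let G be a finite group with an n-power-free decomposition G = C ⊎ B_1 ⊎ ⋯ ⊎ B_n, where C is a cyclic p-subgroup. Then: (i) for every b ∈ G \ C, φ(o(b)) ≤ n, where o(b) is the order of b and φ is Euler's totient function; (ii) every prime q dividing |G| satisfies q ≤ n+1 or q = p, i.e. π(G) ⊆ π((n+1)!) ∪ {p}. -/
/-- `IsNPowerFreeDecomposition p C n B` says that the group `G` is partitioned as
`G = C ⊎ B 0 ⊎ ⋯ ⊎ B (n-1)`, where `C` is a cyclic subgroup of prime-power order
`p ^ m` which is of maximal order among the cyclic subgroups of prime-power order in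
`G`, and each `B i` is an independent set of the power graph `P(G)` with `|B i| > 1`. -/
def IsNPowerFreeDecomposition {G : Type*} [Group G] (p : ℕ) (C : Subgroup G)
    (n : ℕ) (B : Fin n → Set G) : Prop :=
  p.Prime ∧ IsCyclic C ∧ (∃ m : ℕ, Nat.card C = p ^ m) ∧
    (∀ (q : ℕ) (D : Subgroup G), q.Prime → IsCyclic D → (∃ k : ℕ, Nat.card D = q ^ k) →
      Nat.card D ≤ Nat.card C) ∧
    (∀ i, 1 < (B i).ncard) ∧
    (∀ i, ∀ x ∈ B i, ∀ y ∈ B i, x ≠ y → ¬ (powerGraph G).Adj x y) ∧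
    ((C : Set G) ∪ ⋃ i, B i) = Set.univ ∧
    (∀ i, Disjoint (C : Set G) (B i)) ∧
    Pairwise fun i j => Disjoint (B i) (B j)

/-!
Every generator `x` of `⟨b⟩` satisfies `b ∈ ⟨x⟩`, so for `b ∉ C` none of the `φ(o(b))` generators
of `⟨b⟩` lies in the subgroup `C`. They are pairwise adjacent in the power graph, so they form a
clique covered by the independent sets `B i`, each of which meets it at most once; hence
`φ(o(b)) ≤ n`. For a prime `q ∣ |G|`, take `g` of order `q`: if `g ∈ C` then `q ∣ p ^ m`,
so `q = p`; otherwise `q - 1 = φ(q) ≤ n`.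
-/

open Subgroup Nat

theorem SimpleGraph.IsClique.ncard_le_of_subset_iUnion {V ι : Type*} [Fintype ι]
    {Γ : SimpleGraph V} {s : Set V} (hs : Γ.IsClique s) {B : ι → Set V}
    (hB : ∀ i, Γ.IsIndepSet (B i)) (hsB : s ⊆ ⋃ i, B i) : s.ncard ≤ Fintype.card ι := by
  have hsub : ∀ i, (s ∩ B i).Subsingleton := fun i x hx y hy => by
    by_contra hne
    exact hB i hx.2 hy.2 hne (hs hx.1 hy.1 hne)
  calc s.ncard = (⋃ i, s ∩ B i).ncard := by rw [← Set.inter_iUnion, Set.inter_eq_left.2 hsB]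
    _ ≤ ∑ i, (s ∩ B i).ncard := Set.ncard_iUnion_le_of_fintype _
    _ ≤ ∑ _i : ι, 1 := Finset.sum_le_sum fun i _ => (Set.ncard_le_one (hsub i).finite).2 (hsub i)
    _ = Fintype.card ι := by simp

theorem ncard_setOf_zpowers_eq {G : Type*} [Group G] (b : G) (hb : IsOfFinOrder b) :
    {x : G | zpowers x = zpowers b}.ncard = φ (orderOf b) := by
  classical
  have : Finite (zpowers b) := hb.finite_zpowers
  let _ : Fintype (zpowers b) := Fintype.ofFinite _
  have hset : {x : G | zpowers x = zpowers b} =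
      Subtype.val '' {a : zpowers b | orderOf a = orderOf b} := by
    ext x
    constructor
    · intro hx
      refine ⟨⟨x, hx ▸ mem_zpowers x⟩, ?_, rfl⟩
      rw [Set.mem_ofPred_eq, Subgroup.orderOf_mk, ← Nat.card_zpowers, ← Nat.card_zpowers, hx]
    · rintro ⟨a, ha, rfl⟩
      refine eq_of_le_of_card_ge (zpowers_le.2 a.2) ?_
      rw [Nat.card_zpowers, Nat.card_zpowers, Subgroup.orderOf_coe, ha]
  rw [hset, Set.ncard_image_of_injective _ Subtype.val_injective, Set.ncard_eq_toFinset_card',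
    Set.toFinset_ofPred]
  exact IsCyclic.card_orderOf_eq_totient (by rw [← Nat.card_eq_fintype_card, Nat.card_zpowers])

theorem isClique_powerGraph_setOf_zpowers_eq {G : Type*} [Group G] (b : G) :
    (powerGraph G).IsClique {x | zpowers x = zpowers b} := fun x hx _ hy hne =>
  ⟨hne, Or.inl (hy.trans hx.symm ▸ mem_zpowers x)⟩

theorem eq_of_prime_orderOf_mem {G : Type*} [Group G] {C : Subgroup G} {p m q : ℕ}
    (hp : p.Prime) (hC : Nat.card C = p ^ m) (hq : q.Prime) {g : G} (hg : orderOf g = q)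
    (hgC : g ∈ C) : q = p := by
  have hdvd : q ∣ p ^ m := by
    rw [← hg, ← hC, ← Subgroup.orderOf_mk g hgC]
    exact orderOf_dvd_natCard _
  exact (Nat.prime_dvd_prime_iff_eq hq hp).1 (hq.dvd_of_dvd_pow hdvd)

theorem nPowerFreeDecomposition_totient_le_general {G : Type*} [Group G] [Finite G]
    (p : ℕ) (C : Subgroup G) (n : ℕ) (B : Fin n → Set G)
    (hdec : IsNPowerFreeDecomposition p C n B) :
    (∀ b : G, b ∉ C → Nat.totient (orderOf b) ≤ n) ∧
      (∀ q : ℕ, q.Prime → q ∣ Nat.card G → q ≤ n + 1 ∨ q = p) := by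
  obtain ⟨hp, -, ⟨m, hm⟩, -, -, hindep, hcover, -, -⟩ := hdec
  have totient_le : ∀ b : G, b ∉ C → φ (orderOf b) ≤ n := by
    intro b hb
    have hgen : {x : G | zpowers x = zpowers b} ⊆ ⋃ i, B i := fun x hx => by
      have hxC : x ∉ C := fun hxC => hb (zpowers_le.2 hxC (hx ▸ mem_zpowers b))
      simpa [hxC] using hcover.ge (Set.mem_univ x)
    rw [← ncard_setOf_zpowers_eq b (isOfFinOrder_of_finite b)]
    simpa using (isClique_powerGraph_setOf_zpowers_eq b).ncard_le_of_subset_iUnion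
      hindep hgen
  refine ⟨totient_le, fun q hq hqG => ?_⟩
  have := Fact.mk hq
  obtain ⟨g, hg⟩ := exists_prime_orderOf_dvd_card' q hqG
  by_cases hgC : g ∈ C
  · exact Or.inr (eq_of_prime_orderOf_mem hp hm hq hg hgC)
  · have := totient_le g hgC
    rw [hg, totient_prime hq] at this
    omega

/-- If a finite group `G` has an `n`-power-free decomposition `G = C ⊎ B₁ ⊎ ⋯ ⊎ Bₙ`
with `C` a cyclic `p`-subgroup, then (i) `φ(o(b)) ≤ n` for every `b ∉ C`, and
(ii) every prime `q` dividing `|G|` satisfies `q ≤ n + 1` or `q = p`. -/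
theorem nPowerFreeDecomposition_totient_le {G : Type*} [Group G] [Finite G]
    (p : ℕ) (C : Subgroup G) (n : ℕ) (hn : 1 ≤ n) (B : Fin n → Set G)
    (hdec : IsNPowerFreeDecomposition p C n B) :
    (∀ b : G, b ∉ C → Nat.totient (orderOf b) ≤ n) ∧
      (∀ q : ℕ, q.Prime → q ∣ Nat.card G → q ≤ n + 1 ∨ q = p) :=
  nPowerFreeDecomposition_totient_le_general p C n B hdec
end

section
/- Let G be a finite group with an n-power-free decomposition G = C ⊎ B_1 ⊎ ⋯ ⊎ B_n, where C is a cyclic p-subgroup, and suppose p > n + 1 (equivalently, p ∉ π((n+1)!)). Then C is a normal subgroup of G; for every b ∈ G \ C no nontrivial element of C commutes with b (i.e. C_C(b) = {1}); and the center of G is trivial, Z(G) = {1}. -/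
open scoped Nat

section Group

variable {G : Type*} [Group G]

theorem Subgroup.zpowers_pow_eq_of_coprime {g : G} {i : ℕ} (hi : (orderOf g).Coprime i) :
    Subgroup.zpowers (g ^ i) = Subgroup.zpowers g :=
  le_antisymm (Subgroup.zpowers_le.mpr (Subgroup.pow_mem _ (Subgroup.mem_zpowers g) i))
    (Subgroup.zpowers_le.mpr (mem_zpowers_pow_iff.mpr (Nat.coprime_comm.mp hi)))

theorem Subgroup.exists_orderOf_eq_prime_pow_of_mem {C : Subgroup G} {p m : ℕ} (hp : p.Prime)
    (hC : Nat.card C = p ^ m) {c : G} (hc : c ∈ C) : ∃ k, orderOf c = p ^ k :=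
  let ⟨k, _, hk⟩ := (Nat.dvd_prime_pow hp).mp (hC ▸ C.orderOf_dvd_natCard hc)
  ⟨k, hk⟩

theorem Subgroup.ne_bot_of_forall_card_le [Finite G] [Nontrivial G] {C : Subgroup G}
    (hmax : ∀ (q : ℕ) (D : Subgroup G), q.Prime → IsCyclic D →
      (∃ k : ℕ, Nat.card D = q ^ k) → Nat.card D ≤ Nat.card C) : C ≠ ⊥ := by
  obtain ⟨q, hq, hqG⟩ := Nat.exists_prime_and_dvd (Finite.one_lt_card (α := G)).ne'
  have : Fact q.Prime := ⟨hq⟩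
  obtain ⟨g, hg⟩ := exists_prime_orderOf_dvd_card' q hqG
  have hcard : Nat.card (Subgroup.zpowers g) = q := by rw [Nat.card_zpowers, hg]
  have hle := hmax q (Subgroup.zpowers g) hq inferInstance ⟨1, by rw [hcard, pow_one]⟩
  rw [hcard] at hle
  exact (Subgroup.one_lt_card_iff_ne_bot C).mp (hq.one_lt.trans_le hle)

theorem Subgroup.center_eq_bot_of_forall_commute {C : Subgroup G}
    (hbot : C ≠ ⊥) (htop : C ≠ ⊤) (h : ∀ b ∉ C, ∀ c ∈ C, Commute c b → c = 1) :
    Subgroup.center G = ⊥ := by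
  obtain ⟨b, hb⟩ : ∃ b, b ∉ C := by simpa [Subgroup.eq_top_iff'] using htop
  obtain ⟨c, hc, hc1⟩ := C.bot_or_exists_ne_one.resolve_left hbot
  refine (Subgroup.eq_bot_iff_forall _).mpr fun z hz => ?_
  by_cases hzC : z ∈ C
  · exact h b hb z hzC (Subgroup.mem_center_iff.mp hz b).symm
  · exact absurd (h z hzC c hc (Subgroup.mem_center_iff.mp hz c)) hc1

end Group

namespace SimpleGraph

theorem IsClique.ncard_le_of_subset_iUnion_isIndepSet {V ι : Type*} [Finite ι]
    {Γ : SimpleGraph V} {K : Set V} {B : ι → Set V} (hK : Γ.IsClique K)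
    (hB : ∀ i, Γ.IsIndepSet (B i)) (hKB : K ⊆ ⋃ i, B i) : K.ncard ≤ Nat.card ι := by
  choose f hf using fun x : K => Set.mem_iUnion.mp (hKB x.2)
  rw [← Nat.card_coe_set_eq]
  refine Nat.card_le_card_of_injective f fun x y hxy => Subtype.ext ?_
  by_contra hne
  exact hB (f x) (hf x) (hxy ▸ hf y) hne (hK x.2 y.2 hne)

end SimpleGraph

namespace powerGraph

variable {G ι : Type*} [Group G] [Finite ι] {C : Subgroup G} {B : ι → Set G} {p : ℕ}

theorem exists_isClique_ncard_eq_totient (g : G) :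
    ∃ K : Set G, (powerGraph G).IsClique K ∧ K.ncard = φ (orderOf g) ∧
      ∀ x ∈ K, Subgroup.zpowers x = Subgroup.zpowers g := by
  set S : Finset ℕ := {i ∈ Finset.range (orderOf g) | (orderOf g).Coprime i}
  have hgen : ∀ x ∈ (g ^ ·) '' S, Subgroup.zpowers x = Subgroup.zpowers g := by
    rintro _ ⟨i, hi, rfl⟩
    exact Subgroup.zpowers_pow_eq_of_coprime (Finset.mem_filter.mp hi).2
  refine ⟨(g ^ ·) '' S, fun x hx y hy hne => ⟨hne, Or.inl ?_⟩, ?_, hgen⟩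
  · rw [hgen y hy, ← hgen x hx]
    exact Subgroup.mem_zpowers x
  · have hinj : Set.InjOn (g ^ ·) S := pow_injOn_Iio_orderOf.mono fun i hi =>
      Finset.mem_range.mp (Finset.mem_filter.mp hi).1
    rw [hinj.ncard_image, Set.ncard_coe_finset, Nat.totient_eq_card_coprime]

theorem totient_orderOf_le_card_of_notMem (hB : ∀ i, (powerGraph G).IsIndepSet (B i))
    (hcover : (C : Set G) ∪ ⋃ i, B i = Set.univ) {g : G} (hg : g ∉ C) :
    φ (orderOf g) ≤ Nat.card ι := by
  obtain ⟨K, hK, hcard, hgen⟩ := exists_isClique_ncard_eq_totient g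
  refine hcard ▸ hK.ncard_le_of_subset_iUnion_isIndepSet hB fun x hx => ?_
  have hxC : x ∉ C := fun hxC =>
    hg (Subgroup.zpowers_le.mp ((hgen x hx).symm.le.trans (Subgroup.zpowers_le.mpr hxC)))
  exact (Set.eq_univ_iff_forall.mp hcover x).resolve_left hxC

variable [Finite G]

theorem mem_of_prime_dvd_orderOf (hp : p.Prime) (hpn : Nat.card ι + 1 < p)
    (hB : ∀ i, (powerGraph G).IsIndepSet (B i)) (hcover : (C : Set G) ∪ ⋃ i, B i = Set.univ)
    {g : G} (hg : p ∣ orderOf g) : g ∈ C := by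
  by_contra hgC
  have hle := totient_orderOf_le_card_of_notMem hB hcover hgC
  have hge : p - 1 ≤ φ (orderOf g) := calc
    p - 1 = φ p := (Nat.totient_prime hp).symm
    _ ≤ φ (orderOf g) :=
      Nat.le_of_dvd (Nat.totient_pos.mpr (orderOf_pos g)) (Nat.totient_dvd_of_dvd hg)
  omega

theorem mem_of_orderOf_eq_prime_pow (hp : p.Prime) (hpn : Nat.card ι + 1 < p)
    (hB : ∀ i, (powerGraph G).IsIndepSet (B i)) (hcover : (C : Set G) ∪ ⋃ i, B i = Set.univ)
    {g : G} {k : ℕ} (hg : orderOf g = p ^ k) : g ∈ C := by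
  rcases k with _ | k
  · rw [pow_zero, orderOf_eq_one_iff] at hg
    exact hg ▸ C.one_mem
  · exact mem_of_prime_dvd_orderOf hp hpn hB hcover (hg ▸ dvd_pow_self p k.succ_ne_zero)

theorem normal_of_card_eq_prime_pow (hp : p.Prime) (hpn : Nat.card ι + 1 < p)
    (hB : ∀ i, (powerGraph G).IsIndepSet (B i)) (hcover : (C : Set G) ∪ ⋃ i, B i = Set.univ)
    {m : ℕ} (hC : Nat.card C = p ^ m) : C.Normal where
  conj_mem c hc g := by
    obtain ⟨k, hk⟩ := Subgroup.exists_orderOf_eq_prime_pow_of_mem hp hC hc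
    refine mem_of_orderOf_eq_prime_pow hp hpn hB hcover (k := k) ?_
    simpa [hk] using (MulAut.conj g).orderOf_eq c

theorem eq_one_of_commute_of_notMem (hp : p.Prime) (hpn : Nat.card ι + 1 < p)
    (hB : ∀ i, (powerGraph G).IsIndepSet (B i)) (hcover : (C : Set G) ∪ ⋃ i, B i = Set.univ)
    {m : ℕ} (hC : Nat.card C = p ^ m) {b c : G} (hb : b ∉ C) (hc : c ∈ C)
    (hcb : Commute c b) : c = 1 := by
  by_contra hc1
  obtain ⟨q, hq, hqb, hqp⟩ : ∃ q, q.Prime ∧ q ∣ orderOf b ∧ q ≠ p := by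
    by_contra! h
    exact hb (mem_of_orderOf_eq_prime_pow hp hpn hB hcover
      (Nat.eq_prime_pow_of_unique_prime_dvd (orderOf_pos b).ne' fun hr hrb => h _ hr hrb))
  set w := b ^ (orderOf b / q)
  have hw : orderOf w = q := orderOf_pow_orderOf_div (orderOf_pos b).ne' hqb
  obtain ⟨k, hk⟩ := Subgroup.exists_orderOf_eq_prime_pow_of_mem hp hC hc
  have hk0 : k ≠ 0 := by
    rintro rfl
    exact hc1 (orderOf_eq_one_iff.mp (by simpa using hk))
  have hcop : (orderOf c).Coprime (orderOf w) := by
    rw [hk, hw]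
    exact Nat.Coprime.pow_left _ ((Nat.coprime_primes hp hq).mpr hqp.symm)
  have hcw : orderOf (c * w) = p ^ k * q := by
    rw [(hcb.pow_right _).orderOf_mul_eq_mul_orderOf_of_coprime hcop, hk, hw]
  have hwC : w ∈ C := (C.mul_mem_cancel_left hc).mp <| mem_of_prime_dvd_orderOf hp hpn hB hcover
    (hcw ▸ (dvd_pow_self p hk0).mul_right q)
  obtain ⟨j, hj⟩ := Subgroup.exists_orderOf_eq_prime_pow_of_mem hp hC hwC
  exact hqp ((Nat.prime_dvd_prime_iff_eq hq hp).mp (hq.dvd_of_dvd_pow (hw.symm.trans hj).dvd))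

end powerGraph

/-- If a finite group `G` has an `n`-power-free decomposition `G = C ⊎ B₁ ⊎ ⋯ ⊎ Bₙ`
with `C` a cyclic `p`-subgroup and `p > n + 1`, then `C` is normal, no nontrivial
element of `C` commutes with any element outside `C`, and the center of `G` is
trivial. -/
theorem nPowerFreeDecomposition_of_large_p {G : Type*} [Group G] [Finite G]
    (p : ℕ) (C : Subgroup G) (n : ℕ) (hn : 1 ≤ n) (B : Fin n → Set G)
    (hdec : IsNPowerFreeDecomposition p C n B) (hp : n + 1 < p) :
    C.Normal ∧ (∀ b : G, b ∉ C → ∀ c ∈ C, c * b = b * c → c = 1) ∧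
      Subgroup.center G = ⊥ := by
  obtain ⟨hpp, -, ⟨m, hm⟩, hmax, hB1, hB, hcover, hdisjC, -⟩ := hdec
  have hpn : Nat.card (Fin n) + 1 < p := by rwa [Nat.card_fin]
  have hM : ∀ b : G, b ∉ C → ∀ c ∈ C, Commute c b → c = 1 := fun _ hb _ hc hcb =>
    powerGraph.eq_one_of_commute_of_notMem hpp hpn hB hcover hm hb hc hcb
  refine ⟨powerGraph.normal_of_card_eq_prime_pow hpp hpn hB hcover hm, hM, ?_⟩
  obtain ⟨x, hx, y, -, hxy⟩ := Set.one_lt_ncard_iff_nontrivial.mp (hB1 ⟨0, hn⟩)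
  have : Nontrivial G := ⟨x, y, hxy⟩
  have htop : C ≠ ⊤ := fun h =>
    Set.disjoint_left.mp (hdisjC _) (h ▸ Subgroup.mem_top x : x ∈ C) hx
  exact Subgroup.center_eq_bot_of_forall_commute (Subgroup.ne_bot_of_forall_card_le hmax) htop hM
end

section
/- No finite cyclic group has an n-power-free decomposition for any integer n ≥ 1. -/
/-! A generator `g` of a cyclic group is joined in the power graph to every other element, so
it lies in no independent set with two elements. Hence `g ∈ C`, so `C` is the whole group and
leaves no room for a nonempty block `B i`. -/

theorem SimpleGraph.IsIndepSet.notMem_of_forall_adj {V : Type*} {Γ : SimpleGraph V} {s : Set V}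
    (hs : Γ.IsIndepSet s) (hcard : 1 < s.ncard) {v : V} (hv : ∀ w, v ≠ w → Γ.Adj v w) :
    v ∉ s := fun hvs => by
  obtain ⟨w, hws, hwv⟩ := Set.exists_ne_of_one_lt_ncard hcard v
  exact hs hvs hws hwv.symm (hv w hwv.symm)

theorem powerGraph_adj_of_forall_mem_zpowers {G : Type*} [Group G] {g : G}
    (hg : ∀ x, x ∈ Subgroup.zpowers g) {x : G} (hx : g ≠ x) : (powerGraph G).Adj g x :=
  ⟨hx, Or.inr (hg x)⟩

theorem Subgroup.eq_top_of_generator_mem {G : Type*} [Group G] {C : Subgroup G} {g : G}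
    (hg : ∀ x, x ∈ Subgroup.zpowers g) (hgC : g ∈ C) : C = ⊤ :=
  eq_top_iff.mpr fun x _ => Subgroup.zpowers_le.mpr hgC (hg x)

theorem cyclic_no_nPowerFreeDecomposition_general {G : Type*} [Group G]
    (hG : IsCyclic G) :
    ∀ (n : ℕ), 1 ≤ n → ∀ (p : ℕ) (C : Subgroup G) (B : Fin n → Set G),
      ¬ IsNPowerFreeDecomposition p C n B := by
  rintro n hn p C B ⟨-, -, -, -, hcard, hindep, hcover, hdisj, -⟩
  obtain ⟨g, hg⟩ := hG.exists_generator
  have hgC : g ∈ C := by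
    have hg_cover : g ∈ (C : Set G) ∪ ⋃ i, B i := hcover ▸ Set.mem_univ g
    refine hg_cover.resolve_right fun hgB => ?_
    obtain ⟨i, hgi⟩ := Set.mem_iUnion.mp hgB
    exact SimpleGraph.IsIndepSet.notMem_of_forall_adj (hindep i) (hcard i)
      (fun _ => powerGraph_adj_of_forall_mem_zpowers hg) hgi
  have hC : C = ⊤ := Subgroup.eq_top_of_generator_mem hg hgC
  have hB_empty : B ⟨0, hn⟩ = ∅ := by
    simpa [hC] using hdisj ⟨0, hn⟩
  simpa [hB_empty] using hcard ⟨0, hn⟩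

/-- No finite cyclic group has an `n`-power-free decomposition for any `n ≥ 1`. -/
theorem cyclic_no_nPowerFreeDecomposition {G : Type*} [Group G] [Finite G]
    (hG : IsCyclic G) :
    ∀ (n : ℕ), 1 ≤ n → ∀ (p : ℕ) (C : Subgroup G) (B : Fin n → Set G),
      ¬ IsNPowerFreeDecomposition p C n B :=
  cyclic_no_nPowerFreeDecomposition_general hG
end

section
/- For every integer n ≥ 3, the generalized quaternion group Q_{2^n} of order 2^n has a 2-power-free decomposition: Q_{2^n} = C ⊎ B_1 ⊎ B_2, where C is the cyclic subgroup of order 2^{n−1} generated by an element x of maximal order, B_1 = {y, xy, …, x^{2^{n−2}−1}y} and B_2 = {x^{2^{n−2}}y, …, x^{2^{n−1}−1}y} for an element y outside C. -/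
theorem IsNPowerFreeDecomposition.of_two {G : Type*} [Group G] {p : ℕ} {C : Subgroup G}
    {B₀ B₁ : Set G} (hp : p.Prime) (hC : IsCyclic C) (hcard : ∃ m : ℕ, Nat.card C = p ^ m)
    (hmax : ∀ (q : ℕ) (D : Subgroup G), q.Prime → IsCyclic D → (∃ k : ℕ, Nat.card D = q ^ k) →
      Nat.card D ≤ Nat.card C)
    (hB₀ : 1 < B₀.ncard) (hB₁ : 1 < B₁.ncard)
    (hind₀ : (powerGraph G).IsIndepSet B₀) (hind₁ : (powerGraph G).IsIndepSet B₁)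
    (hunion : (C : Set G) ∪ B₀ ∪ B₁ = Set.univ)
    (hC₀ : Disjoint (C : Set G) B₀) (hC₁ : Disjoint (C : Set G) B₁) (h₀₁ : Disjoint B₀ B₁) :
    IsNPowerFreeDecomposition p C 2 fun i => if i = 0 then B₀ else B₁ := by
  refine ⟨hp, hC, hcard, hmax, Fin.forall_fin_two.2 ⟨hB₀, hB₁⟩,
    Fin.forall_fin_two.2 ⟨hind₀, hind₁⟩, ?_, Fin.forall_fin_two.2 ⟨hC₀, hC₁⟩, ?_⟩
  · rw [← hunion, Set.union_assoc]
    congr 1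
    ext g
    simp [Fin.exists_fin_two]
  · intro i j hij
    fin_cases i <;> fin_cases j
    exacts [absurd rfl hij, h₀₁, h₀₁.symm, absurd rfl hij]

theorem IsCyclic.card_le_of_forall_orderOf_le {G : Type*} [Group G] {D : Subgroup G}
    (hD : IsCyclic D) {N : ℕ} (h : ∀ g : G, orderOf g ≤ N) : Nat.card D ≤ N := by
  obtain ⟨g, hg⟩ := hD.exists_generator
  rw [← orderOf_eq_card_of_forall_mem_zpowers hg, ← Subgroup.orderOf_coe]
  exact h g

theorem ZMod.neg_natCast_eq_self_two_mul (m : ℕ) : -(m : ZMod (2 * m)) = m := by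
  have h : ((2 * m : ℕ) : ZMod (2 * m)) = 0 := ZMod.natCast_self _
  push_cast at h
  linear_combination -h

theorem ZMod.val_add_natCast_lt_iff {m : ℕ} [NeZero m] (j : ZMod (2 * m)) :
    (j + m).val < m ↔ m ≤ j.val := by
  have hm : (m : ZMod (2 * m)).val = m := ZMod.val_natCast_of_lt (by have := NeZero.pos m; omega)
  have hj := j.val_lt
  rcases lt_or_ge j.val m with h | h
  · rw [ZMod.val_add_of_lt (by omega), hm]
    omega
  · rw [ZMod.val_add_of_le (by omega), hm]
    omega

namespace QuaternionGroup

variable {m : ℕ}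

def xaLowerHalf (m : ℕ) : Set (QuaternionGroup m) :=
  {g | ∃ j : ZMod (2 * m), j.val < m ∧ g = xa j}

def xaUpperHalf (m : ℕ) : Set (QuaternionGroup m) :=
  {g | ∃ j : ZMod (2 * m), m ≤ j.val ∧ g = xa j}

@[simp]
theorem xa_mem_xaLowerHalf {j : ZMod (2 * m)} : xa j ∈ xaLowerHalf m ↔ j.val < m :=
  ⟨fun ⟨_, hi, h⟩ => xa.inj h ▸ hi, fun h => ⟨j, h, rfl⟩⟩

@[simp]
theorem xa_mem_xaUpperHalf {j : ZMod (2 * m)} : xa j ∈ xaUpperHalf m ↔ m ≤ j.val :=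
  ⟨fun ⟨_, hi, h⟩ => xa.inj h ▸ hi, fun h => ⟨j, h, rfl⟩⟩

theorem xaLowerHalf_subset_range_xa : xaLowerHalf m ⊆ Set.range xa := by
  rintro _ ⟨j, -, rfl⟩
  exact ⟨j, rfl⟩

theorem xaUpperHalf_subset_range_xa : xaUpperHalf m ⊆ Set.range xa := by
  rintro _ ⟨j, -, rfl⟩
  exact ⟨j, rfl⟩

theorem coe_zpowers_a_one [NeZero m] :
    (Subgroup.zpowers (a 1 : QuaternionGroup m) : Set (QuaternionGroup m)) = Set.range a := by
  ext g
  rw [SetLike.mem_coe, ← mem_powers_iff_mem_zpowers]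
  constructor
  · rintro ⟨k, rfl⟩
    exact ⟨k, (a_one_pow k).symm⟩
  · rintro ⟨i, rfl⟩
    exact ⟨i.val, (a_one_pow _).trans (congrArg a (ZMod.natCast_zmod_val i))⟩

theorem disjoint_range_a_range_xa :
    Disjoint (Set.range a) (Set.range (xa : ZMod (2 * m) → QuaternionGroup m)) := by
  rw [Set.disjoint_left]
  rintro _ ⟨i, rfl⟩ ⟨j, h⟩
  cases h

theorem orderOf_le_two_mul (hm : 2 ≤ m) (g : QuaternionGroup m) : orderOf g ≤ 2 * m := by
  have : NeZero m := ⟨by omega⟩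
  cases g with
  | a i => exact (orderOf_a i).trans_le (Nat.div_le_self _ _)
  | xa i => rw [orderOf_xa]; omega

theorem eq_or_eq_sub_of_xa_mem_zpowers [NeZero m] {i j : ZMod (2 * m)}
    (h : xa i ∈ Subgroup.zpowers (xa j)) : i = j ∨ i = j - m := by
  obtain ⟨k, hk⟩ : ∃ k : ℕ, xa j ^ k = xa i := mem_powers_iff_mem_zpowers.2 h
  rw [← pow_mod_orderOf, orderOf_xa] at hk
  have hk4 : k % 4 < 4 := Nat.mod_lt _ (by norm_num)
  interval_cases k % 4
  · cases hk
  · exact .inl (xa.inj (by simpa using hk)).symm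
  · simp [xa_sq] at hk
  · rw [pow_succ, xa_sq, a_mul_xa] at hk
    exact .inr (xa.inj hk).symm

theorem eq_add_of_powerGraph_adj_xa [NeZero m] {i j : ZMod (2 * m)}
    (h : (powerGraph _).Adj (xa i) (xa j)) : i = j + m := by
  obtain ⟨hne, hij | hji⟩ := h
  · rcases eq_or_eq_sub_of_xa_mem_zpowers hij with rfl | rfl
    · exact absurd rfl hne
    · rw [sub_eq_add_neg, ZMod.neg_natCast_eq_self_two_mul]
  · rcases eq_or_eq_sub_of_xa_mem_zpowers hji with rfl | rfl
    · exact absurd rfl hne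
    · ring

theorem isIndepSet_xaLowerHalf [NeZero m] : (powerGraph _).IsIndepSet (xaLowerHalf m) := by
  rintro _ ⟨i, hi, rfl⟩ _ ⟨j, hj, rfl⟩ - hadj
  rw [eq_add_of_powerGraph_adj_xa hadj, ZMod.val_add_natCast_lt_iff] at hi
  omega

theorem isIndepSet_xaUpperHalf [NeZero m] : (powerGraph _).IsIndepSet (xaUpperHalf m) := by
  rintro _ ⟨i, hi, rfl⟩ _ ⟨j, hj, rfl⟩ - hadj
  rw [eq_add_of_powerGraph_adj_xa hadj, ← not_lt, ZMod.val_add_natCast_lt_iff] at hi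
  omega

theorem one_lt_ncard_of_xa_natCast_mem {s : Set (QuaternionGroup m)} {t : ℕ}
    (ht : t + 1 < 2 * m) (h₀ : xa (t : ZMod (2 * m)) ∈ s)
    (h₁ : xa ((t + 1 : ℕ) : ZMod (2 * m)) ∈ s) : 1 < s.ncard := by
  have : NeZero m := ⟨by omega⟩
  refine (Set.one_lt_ncard_iff).2 ⟨_, _, h₀, h₁, fun h => ?_⟩
  have := congrArg ZMod.val (xa.inj h)
  rw [ZMod.val_natCast_of_lt (by omega), ZMod.val_natCast_of_lt ht] at this
  omega

theorem one_lt_ncard_xaLowerHalf (hm : 2 ≤ m) : 1 < (xaLowerHalf m).ncard :=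
  one_lt_ncard_of_xa_natCast_mem (t := 0) (by omega)
    (by rw [xa_mem_xaLowerHalf, ZMod.val_natCast_of_lt (by omega)]; omega)
    (by rw [xa_mem_xaLowerHalf, ZMod.val_natCast_of_lt (by omega)]; omega)

theorem one_lt_ncard_xaUpperHalf (hm : 2 ≤ m) : 1 < (xaUpperHalf m).ncard :=
  one_lt_ncard_of_xa_natCast_mem (t := m) (by omega)
    (by rw [xa_mem_xaUpperHalf, ZMod.val_natCast_of_lt (by omega)])
    (by rw [xa_mem_xaUpperHalf, ZMod.val_natCast_of_lt (by omega)]; omega)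

theorem range_a_union_xaLowerHalf_union_xaUpperHalf :
    Set.range a ∪ xaLowerHalf m ∪ xaUpperHalf m = Set.univ := by
  refine Set.eq_univ_of_forall fun g => ?_
  cases g with
  | a i => exact .inl (.inl ⟨i, rfl⟩)
  | xa i =>
    rcases lt_or_ge i.val m with h | h
    · exact .inl (.inr (xa_mem_xaLowerHalf.2 h))
    · exact .inr (xa_mem_xaUpperHalf.2 h)

theorem disjoint_xaLowerHalf_xaUpperHalf : Disjoint (xaLowerHalf m) (xaUpperHalf m) := by
  rw [Set.disjoint_left]
  rintro _ ⟨i, hi, rfl⟩ hu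
  exact absurd (xa_mem_xaUpperHalf.1 hu) (not_le.2 hi)

end QuaternionGroup

open QuaternionGroup

/-- For `n ≥ 3`, the generalized quaternion group `Q_{2^n}` (realized in Mathlib as
`QuaternionGroup (2^(n-2))`, of order `2^n`) has a 2-power-free decomposition
`Q_{2^n} = C ⊎ B₁ ⊎ B₂` with `C = ⟨x⟩` the cyclic subgroup of order `2^(n-1)`,
`B₁ = {y, xy, …, x^(2^(n-2)-1) y}` and `B₂ = {x^(2^(n-2)) y, …, x^(2^(n-1)-1) y}`. -/
theorem quaternionGroup_two_powerFreeDecomposition (n : ℕ) (hn : 3 ≤ n) :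
    IsNPowerFreeDecomposition (G := QuaternionGroup (2 ^ (n - 2)))
      2 (Subgroup.zpowers (QuaternionGroup.a 1)) 2
      (fun i => if i = 0 then
          {g | ∃ j : ZMod (2 * 2 ^ (n - 2)), (j.val < 2 ^ (n - 2)) ∧
            g = QuaternionGroup.xa j}
        else
          {g | ∃ j : ZMod (2 * 2 ^ (n - 2)), (2 ^ (n - 2) ≤ j.val) ∧
            g = QuaternionGroup.xa j}) := by
  have hm : 2 ≤ 2 ^ (n - 2) := Nat.le_self_pow (by omega) 2
  have hcard : Nat.card (Subgroup.zpowers (a 1 : QuaternionGroup (2 ^ (n - 2)))) =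
      2 * 2 ^ (n - 2) := by
    rw [Nat.card_zpowers, orderOf_a_one]
  have hpow : 2 * 2 ^ (n - 2) = 2 ^ (n - 1) := by
    rw [← pow_succ']
    congr 1
    omega
  refine IsNPowerFreeDecomposition.of_two (B₀ := xaLowerHalf _) (B₁ := xaUpperHalf _)
    Nat.prime_two inferInstance ⟨n - 1, hcard.trans hpow⟩
    (fun _ _ _ hD _ =>
      (hD.card_le_of_forall_orderOf_le (orderOf_le_two_mul hm)).trans_eq hcard.symm)
    (one_lt_ncard_xaLowerHalf hm) (one_lt_ncard_xaUpperHalf hm)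
    isIndepSet_xaLowerHalf isIndepSet_xaUpperHalf ?_ ?_ ?_ disjoint_xaLowerHalf_xaUpperHalf
  all_goals rw [coe_zpowers_a_one]
  exacts [range_a_union_xaLowerHalf_union_xaUpperHalf,
    disjoint_range_a_range_xa.mono_right xaLowerHalf_subset_range_xa,
    disjoint_range_a_range_xa.mono_right xaUpperHalf_subset_range_xa]
end

section
/- Let G be a finite group and let H_1, H_2, …, H_t be nontrivial subgroups of G such that H_i ∩ H_j = {1} for all 1 ≤ i < j ≤ t. Then κ_P(G) ≥ κ_P(H_1) · κ_P(H_2) ⋯ κ_P(H_t), where κ_P(H_i) denotes the number of spanning trees of the induced subgraph of the power graph of G on H_i. -/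
/-!
Let the vertex sets `S i` all contain `v₀` and meet pairwise only in `v₀`. Gluing spanning
trees of the induced subgraphs `G[S i]` gives a connected graph on `⋃ S i` with one edge fewer
than it has vertices, hence a spanning tree, and each tree is recovered from the glued one by
restriction to its piece. In the power graph the identity is adjacent to every other element, so
the pieces `{1, x}`, for the `x` lying in no `Hᵢ`, complete the family to a cover of `G` without
losing any factor.
-/

open Function Set

theorem Set.card_eq_sum_card_sub_one_add_one {V ι : Type*} [Fintype ι] [Finite V]
    {S : ι → Set V} {v₀ : V} (hv : ∀ i, v₀ ∈ S i) (hcover : ∀ x, x ≠ v₀ → ∃ i, x ∈ S i)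
    (hS : Pairwise fun i j ↦ (S i ∩ S j).Subsingleton) :
    Nat.card V = ∑ i, (Nat.card (S i) - 1) + 1 := by
  have hcompl : {v₀}ᶜ = ⋃ i, S i \ {v₀} := by
    ext x
    simp only [mem_compl_iff, mem_singleton_iff, mem_iUnion, mem_sdiff]
    exact ⟨fun hx => (hcover x hx).imp fun i hi => ⟨hi, hx⟩, fun ⟨_, _, hx⟩ => hx⟩
  have hdisj : Pairwise (Disjoint on fun i => S i \ {v₀}) := fun i j hij =>
    Set.disjoint_left.2 fun x hxi hxj => hxi.2 (hS hij ⟨hxi.1, hxj.1⟩ ⟨hv i, hv j⟩)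
  have hpos : 0 < Nat.card V := Nat.card_pos_iff.2 ⟨⟨v₀⟩, inferInstance⟩
  have := ncard_compl {v₀}
  rw [hcompl, ncard_iUnion_of_finite (fun _ => toFinite _) hdisj, finsum_eq_sum_of_fintype,
    ncard_singleton] at this
  simp only [ncard_sdiff_singleton_of_mem (hv _), Nat.card_coe_set_eq] at this ⊢
  omega

namespace SimpleGraph

variable {V ι : Type*}

lemma treeNumber_pos [Finite V] {G : SimpleGraph V} (h : G.Connected) : 0 < treeNumber G := by
  obtain ⟨T, hle, hT⟩ := h.exists_isTree_le
  exact Nat.card_pos_iff.2 ⟨⟨⟨T, hle, hT⟩⟩, inferInstance⟩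

section Glue

variable {S : ι → Set V}

def glue (T : ∀ i, SimpleGraph (S i)) : SimpleGraph V :=
  ⨆ i, (T i).map (Embedding.subtype (· ∈ S i))

variable {T : ∀ i, SimpleGraph (S i)}

lemma glue_adj {u v : V} :
    (glue T).Adj u v ↔ ∃ i, ∃ (hu : u ∈ S i) (hv : v ∈ S i), (T i).Adj ⟨u, hu⟩ ⟨v, hv⟩ := by
  simp only [glue, iSup_adj, map_adj']
  refine exists_congr fun i => ⟨?_, fun ⟨hu, hv, h⟩ => ?_⟩
  · rintro ⟨-, a, b, h, rfl, rfl⟩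
    exact ⟨a.2, b.2, h⟩
  · exact ⟨fun huv => h.ne (Subtype.ext huv), _, _, h, rfl, rfl⟩

lemma glue_le {G : SimpleGraph V} (hT : ∀ i, T i ≤ G.induce (S i)) : glue T ≤ G :=
  iSup_le fun i => (map_le_iff_le_comap _ _ _).2 (hT i)

lemma induce_glue (hS : Pairwise fun i j ↦ (S i ∩ S j).Subsingleton) (i : ι) :
    (glue T).induce (S i) = T i := by
  ext a b
  simp only [comap_adj, glue_adj, Embedding.coe_subtype]
  refine ⟨fun ⟨j, ha, hb, h⟩ => ?_, fun h => ⟨i, a.2, b.2, h⟩⟩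
  obtain rfl | hji := eq_or_ne j i
  · exact h
  · exact absurd (hS hji ⟨ha, a.2⟩ ⟨hb, b.2⟩) fun hab => h.ne (Subtype.ext hab)

lemma edgeSet_glue : (glue T).edgeSet = ⋃ i, Sym2.map (↑) '' (T i).edgeSet := by
  simp only [glue, edgeSet_iSup]
  congr! with i
  exact edgeSet_map _ _

lemma card_edgeSet_glue [Fintype ι] [Finite V]
    (hS : Pairwise fun i j ↦ (S i ∩ S j).Subsingleton) :
    Nat.card (glue T).edgeSet = ∑ i, Nat.card (T i).edgeSet := by
  rw [edgeSet_glue, Nat.card_coe_set_eq, ncard_iUnion_of_finite (fun _ => toFinite _),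
    finsum_eq_sum_of_fintype]
  · simp only [ncard_image_of_injective _ (Sym2.map.injective Subtype.val_injective),
      Nat.card_coe_set_eq]
  · intro i j hij
    rw [onFun, Set.disjoint_left]
    rintro _ ⟨e, he, rfl⟩ ⟨e', -, he'⟩
    induction e with | _ a b =>
    have hmem : ∀ v ∈ Sym2.map (↑) e', v ∈ S j := fun v hv => by
      obtain ⟨w, -, rfl⟩ := Sym2.mem_map.1 hv
      exact w.2
    rw [he', Sym2.map_mk] at hmem
    exact (T i).ne_of_adj he <| Subtype.ext <|
      hS hij ⟨a.2, hmem _ (Sym2.mem_mk_left _ _)⟩ ⟨b.2, hmem _ (Sym2.mem_mk_right _ _)⟩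

lemma connected_glue {v₀ : V} (hv : ∀ i, v₀ ∈ S i) (hcover : ∀ x, x ≠ v₀ → ∃ i, x ∈ S i)
    (hT : ∀ i, (T i).Connected) : (glue T).Connected := by
  have hreach : ∀ x, (glue T).Reachable x v₀ := by
    intro x
    obtain rfl | hx := eq_or_ne x v₀
    · rfl
    obtain ⟨i, hxi⟩ := hcover x hx
    let f : T i →g glue T := ⟨Subtype.val, fun h => glue_adj.2 ⟨i, _, _, h⟩⟩
    exact ((hT i).preconnected ⟨x, hxi⟩ ⟨v₀, hv i⟩).map f
  have : Nonempty V := ⟨v₀⟩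
  exact .mk fun x y => (hreach x).trans (hreach y).symm

lemma isTree_glue [Fintype ι] [Finite V] {v₀ : V} (hv : ∀ i, v₀ ∈ S i)
    (hcover : ∀ x, x ≠ v₀ → ∃ i, x ∈ S i) (hS : Pairwise fun i j ↦ (S i ∩ S j).Subsingleton)
    (hT : ∀ i, (T i).IsTree) : (glue T).IsTree := by
  have hcard i : Nat.card (T i).edgeSet + 1 = Nat.card (S i) :=
    (isTree_iff_connected_and_card.1 (hT i)).2
  refine isTree_iff_connected_and_card.2
    ⟨connected_glue hv hcover fun i => (hT i).connected, ?_⟩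
  rw [card_edgeSet_glue hS, Set.card_eq_sum_card_sub_one_add_one hv hcover hS]
  exact congrArg (· + 1) <| Finset.sum_congr rfl fun i _ => by have := hcard i; omega

end Glue

theorem prod_treeNumber_induce_le_of_cover [Fintype ι] [Finite V] {G : SimpleGraph V}
    {S : ι → Set V} {v₀ : V} (hv : ∀ i, v₀ ∈ S i) (hcover : ∀ x, x ≠ v₀ → ∃ i, x ∈ S i)
    (hS : Pairwise fun i j ↦ (S i ∩ S j).Subsingleton) :
    ∏ i, treeNumber (G.induce (S i)) ≤ treeNumber G := by
  let glueTrees (T : ∀ i, {T : SimpleGraph (S i) // T ≤ G.induce (S i) ∧ T.IsTree}) :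
      {T : SimpleGraph V // T ≤ G ∧ T.IsTree} :=
    ⟨glue fun i => T i, glue_le fun i => (T i).2.1, isTree_glue hv hcover hS fun i => (T i).2.2⟩
  have hinj : Injective glueTrees := fun T T' h => funext fun i => Subtype.ext <| by
    rw [← induce_glue (T := fun i => T i) hS i, ← induce_glue (T := fun i => T' i) hS i]
    exact congrArg (fun T => T.1.induce (S i)) h
  exact Nat.card_pi.symm.trans_le (Nat.card_le_card_of_injective glueTrees hinj)

theorem prod_treeNumber_induce_le [Fintype ι] [Finite V] {G : SimpleGraph V}
    {S : ι → Set V} {v₀ : V} (hv : ∀ i, v₀ ∈ S i)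
    (hS : Pairwise fun i j ↦ (S i ∩ S j).Subsingleton) (hadj : ∀ x, x ≠ v₀ → G.Adj v₀ x) :
    ∏ i, treeNumber (G.induce (S i)) ≤ treeNumber G := by
  classical
  have := Fintype.ofFinite V
  let U := {x // x ≠ v₀ ∧ ∀ i, x ∉ S i}
  let S' : ι ⊕ U → Set V := Sum.elim S fun x => {v₀, x.1}
  have hv' : ∀ a, v₀ ∈ S' a := by rintro (i | x) <;> simp [S', hv]
  have hcover' : ∀ x, x ≠ v₀ → ∃ a, x ∈ S' a := fun x hx => by
    by_cases h : ∃ i, x ∈ S i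
    · obtain ⟨i, hi⟩ := h
      exact ⟨.inl i, hi⟩
    · exact ⟨.inr ⟨x, hx, not_exists.1 h⟩, Or.inr rfl⟩
  have hS' : Pairwise fun a b ↦ (S' a ∩ S' b).Subsingleton := by
    rintro (i | x) (j | y) hab
    · exact hS fun h => hab (congrArg _ h)
    all_goals
      refine (subsingleton_singleton (a := v₀)).anti ?_
      rintro z ⟨hz₁, hz₂⟩
      simp only [S', Sum.elim_inl, Sum.elim_inr, mem_insert_iff, mem_singleton_iff] at hz₁ hz₂
      aesop
  have hpairs (x : U) : 0 < treeNumber (G.induce (S' (.inr x))) :=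
    treeNumber_pos (induce_pair_connected_of_adj (hadj x x.2.1))
  calc ∏ i, treeNumber (G.induce (S i))
      ≤ (∏ i, treeNumber (G.induce (S' (.inl i)))) *
          ∏ x, treeNumber (G.induce (S' (.inr x))) :=
        Nat.le_mul_of_pos_right _ (Finset.prod_pos fun x _ => hpairs x)
    _ = ∏ a, treeNumber (G.induce (S' a)) :=
        (Fintype.prod_sum_type fun a => treeNumber (G.induce (S' a))).symm
    _ ≤ treeNumber G := prod_treeNumber_induce_le_of_cover hv' hcover' hS'

end SimpleGraph

open SimpleGraph

lemma powerGraph_adj_one {G : Type*} [Group G] {x : G} (hx : x ≠ 1) : (powerGraph G).Adj 1 x :=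
  ⟨hx.symm, .inl (one_mem _)⟩

theorem treeNumber_powerGraph_ge_prod_general {G : Type*} [Group G] [Finite G]
    (t : ℕ) (H : Fin t → Subgroup G)
    (hint : ∀ i j, i < j → H i ⊓ H j = ⊥) :
    ∏ i : Fin t, treeNumber ((powerGraph G).induce ((H i : Set G))) ≤
      treeNumber (powerGraph G) := by
  refine prod_treeNumber_induce_le (fun i => (H i).one_mem) (fun i j hij => ?_)
    fun _ => powerGraph_adj_one
  rcases hij.lt_or_gt with h | h
  · rw [← Subgroup.coe_inf, hint i j h, Subgroup.coe_bot]
    exact subsingleton_singleton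
  · rw [inter_comm, ← Subgroup.coe_inf, hint j i h, Subgroup.coe_bot]
    exact subsingleton_singleton

/-- If `H₁, …, Hₜ` are nontrivial subgroups of a finite group `G` with pairwise
trivial intersections, then `κ_P(G) ≥ κ_P(H₁) · κ_P(H₂) ⋯ κ_P(Hₜ)`, where `κ_P(Hᵢ)`
is the number of spanning trees of the induced subgraph of the power graph on `Hᵢ`. -/
theorem treeNumber_powerGraph_ge_prod {G : Type*} [Group G] [Finite G]
    (t : ℕ) (H : Fin t → Subgroup G) (hbot : ∀ i, H i ≠ ⊥)
    (hint : ∀ i j, i < j → H i ⊓ H j = ⊥) :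
    ∏ i : Fin t, treeNumber ((powerGraph G).induce ((H i : Set G))) ≤
      treeNumber (powerGraph G) :=
  treeNumber_powerGraph_ge_prod_general t H hint
end
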